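/- arXiv:1904.05190 — 2 statements merged into one kernel-verified Lean document; each statement's English description precedes it below -/
import Mathlib

section
/- If e^{tA} is a C₀-semigroup on a complex Banach space B that extends to an analytic semigroup e^{zA} defined on a sector S_θ = {z ∈ ℂ : z ≠ 0, |arg z| < θ} with θ > 0, then for every z₀ ∈ S_θ the operator e^{z₀A} is injective. -/
/-!
For `x` in the kernel of `e^{z₀A}`, the holomorphic function `z ↦ e^{zA} x` vanishes on the
open set `z₀ + S_θ`, since `e^{(z₀ + w)A} x = e^{wA} e^{z₀A} x`. The sector is connected, being
the image of a horizontal strip under `exp`, so by the identity theorem the function vanishes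
on all of `S_θ`, in particular on `(0, ∞)`; strong continuity at `0` then forces `x = 0`.
-/

open Complex Filter Topology

namespace Complex

def sector (θ : ℝ) : Set ℂ := {z : ℂ | z ≠ 0 ∧ |z.arg| < θ}

variable {θ : ℝ}

theorem exp_image_abs_im_lt : exp '' {w : ℂ | |w.im| < θ} = sector θ := by
  ext z
  constructor
  · rintro ⟨w, hw : |w.im| < θ, rfl⟩
    refine ⟨exp_ne_zero w, ?_⟩
    rcases le_or_gt θ Real.pi with hθπ | hπθ
    · have hw' := abs_lt.1 hw
      rwa [← log_im, log_exp (by linarith) (by linarith)]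
    · exact (abs_arg_le_pi _).trans_lt hπθ
  · rintro ⟨hz, harg⟩
    exact ⟨log z, show |(log z).im| < θ by rwa [log_im], exp_log hz⟩

theorem isOpen_sector (θ : ℝ) : IsOpen (sector θ) :=
  exp_image_abs_im_lt ▸
    isOpenMap_exp _ (isOpen_lt (continuous_abs.comp continuous_im) continuous_const)

theorem isPreconnected_sector (θ : ℝ) : IsPreconnected (sector θ) := by
  rw [← exp_image_abs_im_lt]
  refine IsPreconnected.image ?_ _ continuous_exp.continuousOn
  have : {w : ℂ | |w.im| < θ} = im ⁻¹' Set.Ioo (-θ) θ := by ext; simp [abs_lt]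
  exact this ▸ ((convex_Ioo (-θ) θ).linear_preimage imLm).isPreconnected

theorem ofReal_mem_sector {t : ℝ} (ht : 0 < t) (hθ : 0 < θ) : (t : ℂ) ∈ sector θ :=
  ⟨ofReal_ne_zero.2 ht.ne', by rwa [arg_ofReal_of_nonneg ht.le, abs_zero]⟩

theorem ofReal_mul_mem_sector {r : ℝ} (hr : 0 < r) {z : ℂ} (hz : z ∈ sector θ) :
    (r : ℂ) * z ∈ sector θ :=
  ⟨mul_ne_zero (ofReal_ne_zero.2 hr.ne') hz.1, by rw [arg_real_mul z hr]; exact hz.2⟩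

end Complex

theorem eqOn_zero_of_semigroup_apply_eq_zero {B : Type*} [NormedAddCommGroup B]
    [NormedSpace ℂ B] [CompleteSpace B] {θ : ℝ} {E : ℂ → B →L[ℂ] B}
    (hsg : ∀ z ∈ sector θ, ∀ w ∈ sector θ, E (z + w) = (E z).comp (E w))
    (hanal : DifferentiableOn ℂ E (sector θ)) {z₀ : ℂ} (hz₀ : z₀ ∈ sector θ) {x : B}
    (hx : E z₀ x = 0) : Set.EqOn (fun z => E z x) 0 (sector θ) := by
  have hanal_x : AnalyticOnNhd ℂ (fun z => E z x) (sector θ) :=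
    (hanal.clm_apply (differentiableOn_const x)).analyticOnNhd (isOpen_sector θ)
  have h2z₀ : z₀ + z₀ ∈ sector θ := by
    simpa [← two_mul] using ofReal_mul_mem_sector two_pos hz₀
  have hshift : ∀ᶠ z in 𝓝 (z₀ + z₀), z - z₀ ∈ sector θ :=
    (continuous_id.sub continuous_const).continuousAt.preimage_mem_nhds
      (by simpa using (isOpen_sector θ).mem_nhds hz₀)
  have hvanish : (fun z => E z x) =ᶠ[𝓝 (z₀ + z₀)] 0 := by
    filter_upwards [hshift] with z hz
    simpa [hx] using congr($(hsg _ hz _ hz₀) x)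
  exact hanal_x.eqOn_zero_of_preconnected_of_eventuallyEq_zero (isPreconnected_sector θ) h2z₀
    hvanish

theorem analytic_semigroup_injective_general
    {B : Type*} [NormedAddCommGroup B] [NormedSpace ℂ B] [CompleteSpace B]
    (θ : ℝ)
    (E : ℂ → B →L[ℂ] B)
    (hsg : ∀ z w : ℂ, (z = 0 ∨ (z ≠ 0 ∧ |z.arg| < θ)) → (w = 0 ∨ (w ≠ 0 ∧ |w.arg| < θ)) →
      E (z + w) = (E z).comp (E w))
    (hanal : DifferentiableOn ℂ E {z : ℂ | z ≠ 0 ∧ |z.arg| < θ})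
    (hcont : ∀ x : B, Tendsto (fun t : ℝ => E (t : ℂ) x) (𝓝[>] (0 : ℝ)) (𝓝 x)) :
    ∀ z₀ : ℂ, z₀ ≠ 0 → |z₀.arg| < θ → Function.Injective (E z₀) := by
  intro z₀ hz₀ harg
  have hθ : 0 < θ := (abs_nonneg _).trans_lt harg
  refine (injective_iff_map_eq_zero (E z₀)).2 fun x hx => ?_
  have hzero := eqOn_zero_of_semigroup_apply_eq_zero (fun z hz w hw => hsg z w (.inr hz) (.inr hw))
    hanal ⟨hz₀, harg⟩ hx
  refine tendsto_nhds_unique (hcont x) (tendsto_const_nhds.congr' ?_)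
  filter_upwards [self_mem_nhdsWithin] with t ht
  exact (hzero (ofReal_mem_sector ht hθ)).symm

/-- An analytic semigroup on a sector `S_θ` consists of injective operators. -/
theorem analytic_semigroup_injective
    {B : Type*} [NormedAddCommGroup B] [NormedSpace ℂ B] [CompleteSpace B]
    (θ : ℝ) (hθ : 0 < θ) (hθ' : θ ≤ Real.pi / 2)
    (E : ℂ → B →L[ℂ] B)
    (hE0 : E 0 = ContinuousLinearMap.id ℂ B)
    (hsg : ∀ z w : ℂ, (z = 0 ∨ (z ≠ 0 ∧ |z.arg| < θ)) → (w = 0 ∨ (w ≠ 0 ∧ |w.arg| < θ)) →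
      E (z + w) = (E z).comp (E w))
    (hanal : DifferentiableOn ℂ E {z : ℂ | z ≠ 0 ∧ |z.arg| < θ})
    (hcont : ∀ x : B, Tendsto (fun t : ℝ => E (t : ℂ) x) (𝓝[>] (0 : ℝ)) (𝓝 x)) :
    ∀ z₀ : ℂ, z₀ ≠ 0 → |z₀.arg| < θ → Function.Injective (E z₀) :=
  analytic_semigroup_injective_general θ E hsg hanal hcont
end

section
/- Duhamel formula via injectivity: let e^{-tA} be the analytic semigroup generated by −A on V*, and let u ∈ L₂(0,T;V) ∩ H¹(0,T;V*) solve u' + Au = f with u(0) = u₀ for f ∈ L₂(0,T;V*). Then for all t ∈ [0,T], u(t) = e^{-tA}u₀ + ∫₀ᵗ e^{-(t-s)A} f(s) ds. -/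
/-!
Fix `t` and put `g s = S (t - s) (ε (u s))`. Since `-A` generates `S` and `u' = f - A u`, the two
`A`-terms cancel in the product rule and `g' s = S (t - s) (f s)`. The product rule needs no norm
continuity of `S`: strong continuity plus the uniform bound on `‖S r‖` for `r ∈ [0, t]` given by
Banach–Steinhaus suffice. Integrating `g'` over `[0, t]` and using `S 0 = id` gives the formula.
-/

open MeasureTheory intervalIntegral Set Filter Topology Asymptotics

theorem exists_forall_norm_le_of_continuousOn_apply {X 𝕜 E F : Type*} [TopologicalSpace X]
    [NontriviallyNormedField 𝕜] [NormedAddCommGroup E] [NormedSpace 𝕜 E] [CompleteSpace E]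
    [NormedAddCommGroup F] [NormedSpace 𝕜 F] {S : X → E →L[𝕜] F} {K : Set X}
    (hK : IsCompact K) (hS : ∀ x, ContinuousOn (fun r => S r x) K) :
    ∃ C, ∀ r ∈ K, ‖S r‖ ≤ C := by
  have hpointwise : ∀ x, ∃ C, ∀ r : K, ‖S r x‖ ≤ C := fun x => by
    obtain ⟨C, hC⟩ := hK.exists_bound_of_continuousOn (hS x)
    exact ⟨C, fun r => hC r r.2⟩
  obtain ⟨C, hC⟩ := banach_steinhaus hpointwise
  exact ⟨C, fun r hr => hC ⟨r, hr⟩⟩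

theorem HasDerivWithinAt.clm_apply_of_bounded_of_continuousWithinAt {𝕜 E F : Type*}
    [NontriviallyNormedField 𝕜] [NormedAddCommGroup E] [NormedSpace 𝕜 E]
    [NormedAddCommGroup F] [NormedSpace 𝕜 F] {S : 𝕜 → E →L[𝕜] F} {w : 𝕜 → E}
    {w' : E} {d : F} {s : Set 𝕜} {x : 𝕜} {C : ℝ} (hw : HasDerivWithinAt w w' s x)
    (hSw : HasDerivWithinAt (fun r => S r (w x)) d s x)
    (hbound : ∀ᶠ r in 𝓝[s] x, ‖S r‖ ≤ C) (hcont : ContinuousWithinAt (fun r => S r w') s x) :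
    HasDerivWithinAt (fun r => S r (w r)) (S x w' + d) s x := by
  rw [hasDerivWithinAt_iff_isLittleO] at hw hSw ⊢
  have hremainder : (fun r => S r (w r - w x - (r - x) • w')) =o[𝓝[s] x] fun r => r - x :=
    (IsBigO.of_bound C (hbound.mono fun r hr => (S r).le_of_opNorm_le hr _)).trans_isLittleO hw
  have hvariation : (fun r => (r - x) • (S r w' - S x w')) =o[𝓝[s] x] fun r => r - x := by
    have hlim : (fun r => S r w' - S x w') =o[𝓝[s] x] fun _ => (1 : 𝕜) :=
      (isLittleO_one_iff 𝕜).2 (by simpa using hcont.tendsto.sub_const (S x w'))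
    simpa using (isBigO_refl (fun r => r - x) _).smul_isLittleO hlim
  refine ((hremainder.add hvariation).add hSw).congr_left fun r => ?_
  simp only [map_sub, map_smul, smul_add, smul_sub]
  abel

theorem hasDerivWithinAt_apply_sub_apply {E : Type*} [NormedAddCommGroup E] [NormedSpace ℝ E]
    {S : ℝ → E →L[ℝ] E} {C t s : ℝ} (hbound : ∀ r ∈ Icc 0 t, ‖S r‖ ≤ C)
    (hcont : ∀ x, ContinuousOn (fun r => S r x) (Ici 0)) {w : ℝ → E} {a b : E}
    (hs : s ∈ Icc 0 t) (hw : HasDerivWithinAt w (b - a) (Icc 0 t) s)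
    (hgen : HasDerivWithinAt (fun r => S r (w s)) (-S (t - s) a) (Ici 0) (t - s)) :
    HasDerivWithinAt (fun r => S (t - r) (w r)) (S (t - s) b) (Icc 0 t) s := by
  have hreflect : MapsTo (t - ·) (Icc 0 t) (Icc 0 t) := fun r hr =>
    ⟨sub_nonneg.2 hr.2, sub_le_self t hr.1⟩
  have hreflect' : MapsTo (t - ·) (Icc 0 t) (Ici 0) := fun r hr => (hreflect hr).1
  have hSw : HasDerivWithinAt (fun r => S (t - r) (w s)) (S (t - s) a) (Icc 0 t) s := by
    simpa [Function.comp_def] using hgen.scomp s ((hasDerivWithinAt_id s _).const_sub t) hreflect'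
  have hcont' : ContinuousWithinAt (fun r => S (t - r) (b - a)) (Icc 0 t) s :=
    (hcont _ _ (hreflect' hs)).comp (continuousWithinAt_const.sub continuousWithinAt_id)
      hreflect'
  have hbound' : ∀ᶠ r in 𝓝[Icc 0 t] s, ‖S (t - r)‖ ≤ C :=
    eventually_mem_nhdsWithin.mono fun r hr => hbound _ (hreflect hr)
  convert hw.clm_apply_of_bounded_of_continuousWithinAt hSw hbound' hcont' using 1
  simp

theorem duhamel_formula_general
    {V Vd : Type*}
    [NormedAddCommGroup V] [InnerProductSpace ℂ V] [CompleteSpace V]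
    [NormedAddCommGroup Vd] [InnerProductSpace ℂ Vd] [CompleteSpace Vd]
    (ε : V →L[ℂ] Vd)                 -- the embedding V ↪ V*
    (A : V →L[ℂ] Vd)                 -- the (extended) Lax–Milgram operator
    (S : ℝ → Vd →L[ℂ] Vd)            -- the semigroup e^{-tA} on V*
    (h0 : S 0 = ContinuousLinearMap.id ℂ Vd)
    (hScont : ∀ x : Vd, ContinuousOn (fun t : ℝ => S t x) (Set.Ici 0))
    -- `-A` generates `S`: d/dt S(t) εv = -S(t) Av
    (hgen : ∀ (v : V) (t : ℝ), 0 ≤ t →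
      HasDerivWithinAt (fun r : ℝ => S r (ε v)) (-(S t (A v))) (Set.Ici 0) t)
    (T : ℝ)
    (u : ℝ → V) (f : ℝ → Vd)
    (hfi : ∀ t ∈ Set.Icc (0 : ℝ) T,
      IntervalIntegrable (fun s => S (t - s) (f s)) volume 0 t)
    -- the equation u' + Au = f in V* on [0,T]
    (heq : ∀ t ∈ Set.Icc (0 : ℝ) T,
      HasDerivWithinAt (fun s => ε (u s)) (f t - A (u t)) (Set.Icc (0 : ℝ) T) t) :
    ∀ t ∈ Set.Icc (0 : ℝ) T,
      ε (u t) = S t (ε (u 0)) + ∫ s in (0 : ℝ)..t, S (t - s) (f s) := by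
  rintro t ⟨ht0, htT⟩
  obtain ⟨C, hC⟩ := exists_forall_norm_le_of_continuousOn_apply
    (S := fun r => (S r).restrictScalars ℝ) (isCompact_Icc (a := 0) (b := t))
    fun x => (hScont x).mono fun r hr => hr.1
  have hderiv : ∀ s ∈ Icc 0 t,
      HasDerivWithinAt (fun s => S (t - s) (ε (u s))) (S (t - s) (f s)) (Icc 0 t) s :=
    fun s hs => hasDerivWithinAt_apply_sub_apply (S := fun r => (S r).restrictScalars ℝ) hC
      hScont hs ((heq s ⟨hs.1, hs.2.trans htT⟩).mono (Icc_subset_Icc_right htT))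
      (hgen (u s) (t - s) (sub_nonneg.2 hs.2))
  have hFTC := integral_eq_sub_of_hasDeriv_right_of_le ht0
    (fun s hs => (hderiv s hs).continuousWithinAt)
    (fun s hs => (hderiv s (Ioo_subset_Icc_self hs)).mono_of_mem_nhdsWithin
      (Icc_mem_nhdsGT_of_mem ⟨hs.1.le, hs.2⟩))
    (hfi t ⟨ht0, htT⟩)
  simp only [sub_self, sub_zero, h0, ContinuousLinearMap.id_apply] at hFTC
  rw [hFTC]
  abel

/-- Duhamel formula via injectivity: if `u` solves `u' + Au = f`, `u(0) = u₀` in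
the Gelfand-triple setting (here `ε : V → V*` is the embedding and `e^{-tA}` is
the injective analytic semigroup `S` generated by `-A` on `V*`), then
`u(t) = e^{-tA} u(0) + ∫₀ᵗ e^{-(t-s)A} f(s) ds` for all `t ∈ [0,T]`. -/
theorem duhamel_formula
    {V Vd : Type*}
    [NormedAddCommGroup V] [InnerProductSpace ℂ V] [CompleteSpace V]
    [NormedAddCommGroup Vd] [InnerProductSpace ℂ Vd] [CompleteSpace Vd]
    (ε : V →L[ℂ] Vd)                 -- the embedding V ↪ V*
    (A : V →L[ℂ] Vd)                 -- the (extended) Lax–Milgram operator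
    (S : ℝ → Vd →L[ℂ] Vd)            -- the semigroup e^{-tA} on V*
    (h0 : S 0 = ContinuousLinearMap.id ℂ Vd)
    (hsg : ∀ s t : ℝ, 0 ≤ s → 0 ≤ t → S (s + t) = (S s).comp (S t))
    (hinj : ∀ t : ℝ, 0 ≤ t → Function.Injective (S t))
    (hScont : ∀ x : Vd, ContinuousOn (fun t : ℝ => S t x) (Set.Ici 0))
    -- `-A` generates `S`: d/dt S(t) εv = -S(t) Av
    (hgen : ∀ (v : V) (t : ℝ), 0 ≤ t →
      HasDerivWithinAt (fun r : ℝ => S r (ε v)) (-(S t (A v))) (Set.Ici 0) t)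
    (T : ℝ) (hT : 0 < T)
    (u : ℝ → V) (f : ℝ → Vd)
    (hf : IntervalIntegrable f volume 0 T)
    (hfi : ∀ t ∈ Set.Icc (0 : ℝ) T,
      IntervalIntegrable (fun s => S (t - s) (f s)) volume 0 t)
    -- the equation u' + Au = f in V* on [0,T]
    (heq : ∀ t ∈ Set.Icc (0 : ℝ) T,
      HasDerivWithinAt (fun s => ε (u s)) (f t - A (u t)) (Set.Icc (0 : ℝ) T) t) :
    ∀ t ∈ Set.Icc (0 : ℝ) T,
      ε (u t) = S t (ε (u 0)) + ∫ s in (0 : ℝ)..t, S (t - s) (f s) :=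
  duhamel_formula_general ε A S h0 hScont hgen T u f hfi heq
end
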